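/- Two-particle branch bound (repulsive case): for μ > 0 and any K ∈ T^d, sup_{p∈T^d}[e_μ(K-p) + ε(p)] > E_max(K) = max_{p,q}E(K;p,q), where e_μ(k) > max_q E_{γ,k}(q) is the unique eigenvalue of h_μ(k) above its essential spectrum; hence the top of the essential spectrum of H_μ(K) exceeds E_max(K). -/
import Mathlib


open MeasureTheory Real

instance : Fact (0 < 2 * π) := ⟨by positivity⟩

/-- Equip the circle `ℝ/2πℤ` with its Haar measure. -/
noncomputable instance : MeasureSpace Real.Angle :=
  inferInstanceAs (MeasureSpace (AddCircle (2 * π)))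

instance : SigmaFinite (volume : Measure Real.Angle) :=
  inferInstanceAs (SigmaFinite (volume : Measure (AddCircle (2 * π))))

/-- The lattice dispersion relation `ε(p) = 2∑ᵢ (1 - cos pⁱ)` on the torus `T^d`. -/
noncomputable def eps (d : ℕ) (p : Fin d → Real.Angle) : ℝ :=
  2 * ∑ i, (1 - (p i).cos)

/-- The normalized Haar measure `η` on the torus `T^d`. -/
noncomputable def haarT (d : ℕ) : Measure (Fin d → Real.Angle) :=
  (ENNReal.ofReal ((2 * π) ^ d))⁻¹ • volume

/-- The three-particle dispersion `E(K;p,q) = ε(p) + ε(q) + γ ε(K - p - q)`. -/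
noncomputable def Edisp (d : ℕ) (γ : ℝ) (K p q : Fin d → Real.Angle) : ℝ :=
  eps d p + eps d q + γ * eps d (K - p - q)

instance : CompactSpace Real.Angle :=
  inferInstanceAs (CompactSpace (AddCircle (2 * π)))

/-- two-particle branch bound, repulsive case `μ > 0`: if
`e(k) > max_q E_{γ,k}(q)` for every `k`, then `sup_p [e(K-p) + ε(p)] > E_max(K)`,
i.e. some value `e(K-p) + ε(p)` of the two-particle branch lies strictly above the
top of the three-particle branch. -/
theorem stmt16 (d : ℕ) (hd : d = 1 ∨ d = 2) (γ μ : ℝ) (hγ : 0 < γ) (hμ : 0 < μ)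
    (K : Fin d → Real.Angle) (e : (Fin d → Real.Angle) → ℝ)
    (he : ∀ k, e k > sSup (Set.range fun q => eps d q + γ * eps d (k - q))) :
    ∃ p, e (K - p) + eps d p
      > sSup (Set.range fun x : (Fin d → Real.Angle) × (Fin d → Real.Angle) =>
          Edisp d γ K x.1 x.2) := by
  have heps : Continuous (eps d) := by
    unfold eps
    exact continuous_const.mul (continuous_finset_sum _ fun i _ =>
      continuous_const.sub (Real.Angle.continuous_cos.comp (continuous_apply i)))
  have hc : Continuous fun x : (Fin d → Real.Angle) × (Fin d → Real.Angle) =>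
      Edisp d γ K x.1 x.2 := by
    unfold Edisp
    exact ((heps.comp continuous_fst).add (heps.comp continuous_snd)).add
      (continuous_const.mul
        (heps.comp ((continuous_const.sub continuous_fst).sub continuous_snd)))
  obtain ⟨x₀, -, hx₀⟩ := isCompact_univ.exists_isMaxOn (Set.univ_nonempty)
    hc.continuousOn
  refine ⟨x₀.1, ?_⟩
  have hsup : sSup (Set.range fun x : (Fin d → Real.Angle) × (Fin d → Real.Angle) =>
      Edisp d γ K x.1 x.2) ≤ Edisp d γ K x₀.1 x₀.2 := by
    apply csSup_le (Set.range_nonempty _)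
    rintro _ ⟨y, rfl⟩
    exact hx₀ trivial
  have hc2 : Continuous fun q => eps d q + γ * eps d (K - x₀.1 - q) :=
    heps.add (continuous_const.mul (heps.comp (continuous_const.sub continuous_id)))
  have hbdd : BddAbove (Set.range fun q => eps d q + γ * eps d (K - x₀.1 - q)) :=
    (isCompact_range hc2).bddAbove
  have h1 : eps d x₀.2 + γ * eps d (K - x₀.1 - x₀.2)
      ≤ sSup (Set.range fun q => eps d q + γ * eps d (K - x₀.1 - q)) :=
    le_csSup hbdd ⟨x₀.2, rfl⟩
  have h2 := he (K - x₀.1)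
  have h3 : e (K - x₀.1) > eps d x₀.2 + γ * eps d (K - x₀.1 - x₀.2) :=
    lt_of_le_of_lt h1 h2
  calc sSup (Set.range fun x : (Fin d → Real.Angle) × (Fin d → Real.Angle) =>
        Edisp d γ K x.1 x.2) ≤ Edisp d γ K x₀.1 x₀.2 := hsup
    _ < e (K - x₀.1) + eps d x₀.1 := by unfold Edisp; linarith
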